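/- Suppose the graph G is ergodic, r ∈ P^{σ,τ} for some (σ,τ) ∈ Ξ, and fix a discount factor γ with 1 > γ > 1 − 1/(6n²Δ(r)). Then (σ,τ) is the unique pair of optimal policies of the discounted game with discount factor γ; equivalently, for every vector λ^{(γ)} ∈ ℝ^n satisfying the Shapley equations λ^{(γ)}_i = max_{(i,j)∈E} {(1−γ)r_{ij} + γλ^{(γ)}_j} for i ∈ V_Max and λ^{(γ)}_i = min_{(i,j)∈E} {(1−γ)r_{ij} + γλ^{(γ)}_j} for i ∈ V_Min, the maximum at each i ∈ V_Max is achieved only by the edge (i,σ(i)) and the minimum at each i ∈ V_Min is achieved only by the edge (i,τ(i)). -/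

import Mathlib

open MeasureTheory

/-- Weight of a pair of vertices: the weight of the corresponding edge if it exists, `0`
otherwise. -/
noncomputable def wt {n : ℕ} (E : Finset (Fin n × Fin n))
    (r : {e : Fin n × Fin n // e ∈ E} → ℝ) (p : Fin n × Fin n) : ℝ :=
  if h : p ∈ E then r ⟨p, h⟩ else 0

/-- The set of values `r_{ij} + u_j` over the edges `(i,j)` going out of `i`. -/
def outVals {n : ℕ} (E : Finset (Fin n × Fin n)) (r : {e : Fin n × Fin n // e ∈ E} → ℝ)
    (u : Fin n → ℝ) (i : Fin n) : Set ℝ :=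
  {v | ∃ j : Fin n, (i, j) ∈ E ∧ v = wt E r (i, j) + u j}

/-- `(λ, u)` solves the ergodic equation:
`λ + u i = max_{(i,j) ∈ E} (r_{ij} + u_j)` for `i ∈ VMax` and
`λ + u i = min_{(i,j) ∈ E} (r_{ij} + u_j)` for `i ∉ VMax` (i.e. `i ∈ VMin`). -/
def IsErgodicSol {n : ℕ} (E : Finset (Fin n × Fin n)) (VMax : Finset (Fin n))
    (r : {e : Fin n × Fin n // e ∈ E} → ℝ) (lam : ℝ) (u : Fin n → ℝ) : Prop :=
  ∀ i : Fin n,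
    (i ∈ VMax → IsGreatest (outVals E r u i) (lam + u i)) ∧
    (i ∉ VMax → IsLeast (outVals E r u i) (lam + u i))

/-- A policy of player Max. -/
def IsMaxPolicy {n : ℕ} (E : Finset (Fin n × Fin n)) (VMax : Finset (Fin n))
    (σ : {i : Fin n // i ∈ VMax} → Fin n) : Prop :=
  ∀ i, (i.1, σ i) ∈ E

/-- A policy of player Min. -/
def IsMinPolicy {n : ℕ} (E : Finset (Fin n × Fin n)) (VMax : Finset (Fin n))
    (τ : {i : Fin n // i ∉ VMax} → Fin n) : Prop :=
  ∀ i, (i.1, τ i) ∈ E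

/-- The successor map of the subgraph `G^{σ,τ}` in which every vertex keeps only the edge
chosen by the corresponding policy. -/
def combine {n : ℕ} (VMax : Finset (Fin n)) (σ : {i : Fin n // i ∈ VMax} → Fin n)
    (τ : {i : Fin n // i ∉ VMax} → Fin n) : Fin n → Fin n :=
  fun i => if h : i ∈ VMax then σ ⟨i, h⟩ else τ ⟨i, h⟩

/-- The bias `u` induces the pair of policies `(σ, τ)`: at every vertex, the edge chosen by
the policy achieves the maximum (for Max) or minimum (for Min) of `r_{ij} + u_j`. -/
def Induces {n : ℕ} (E : Finset (Fin n × Fin n)) (VMax : Finset (Fin n))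
    (r : {e : Fin n × Fin n // e ∈ E} → ℝ) (u : Fin n → ℝ)
    (σ : {i : Fin n // i ∈ VMax} → Fin n) (τ : {i : Fin n // i ∉ VMax} → Fin n) : Prop :=
  IsMaxPolicy E VMax σ ∧ IsMinPolicy E VMax τ ∧
  (∀ i : {i : Fin n // i ∈ VMax},
      IsGreatest (outVals E r u i.1) (wt E r (i.1, σ i) + u (σ i))) ∧
  (∀ i : {i : Fin n // i ∉ VMax},
      IsLeast (outVals E r u i.1) (wt E r (i.1, τ i) + u (τ i)))

/-- The mean payoff `g_i` of the play starting at `i` following the successor map `f`. -/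
noncomputable def payoff {n : ℕ} (E : Finset (Fin n × Fin n))
    (r : {e : Fin n × Fin n // e ∈ E} → ℝ) (f : Fin n → Fin n) (i : Fin n) : ℝ :=
  Filter.liminf
    (fun N : ℕ => (N : ℝ)⁻¹ * ∑ t ∈ Finset.range N, wt E r (f^[t] i, f^[t + 1] i))
    Filter.atTop

/-- `x` lies on a directed cycle of the functional graph of `f`. -/
def IsPeriodicVertex {n : ℕ} (f : Fin n → Fin n) (x : Fin n) : Prop :=
  ∃ k : ℕ, 0 < k ∧ f^[k] x = x

/-- The functional graph of `f` has exactly one directed cycle. -/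
def HasUniqueCycle {n : ℕ} (f : Fin n → Fin n) : Prop :=
  ∀ x y : Fin n, IsPeriodicVertex f x → IsPeriodicVertex f y → ∃ k : ℕ, f^[k] x = y

/-- `(σ, τ)` is a bias-induced pair of policies of the MPG with weights `r`. -/
def BiasInduced {n : ℕ} (E : Finset (Fin n × Fin n)) (VMax : Finset (Fin n))
    (r : {e : Fin n × Fin n // e ∈ E} → ℝ)
    (σ : {i : Fin n // i ∈ VMax} → Fin n) (τ : {i : Fin n // i ∉ VMax} → Fin n) : Prop :=
  ∃ lam u, IsErgodicSol E VMax r lam u ∧ Induces E VMax r u σ τ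

/-- `(σ, τ) ∈ Ξ`: a pair of policies whose subgraph `G^{σ,τ}` has exactly one cycle. -/
def InXi {n : ℕ} (E : Finset (Fin n × Fin n)) (VMax : Finset (Fin n))
    (σ : {i : Fin n // i ∈ VMax} → Fin n) (τ : {i : Fin n // i ∉ VMax} → Fin n) : Prop :=
  IsMaxPolicy E VMax σ ∧ IsMinPolicy E VMax τ ∧ HasUniqueCycle (combine VMax σ τ)

/-- `P^{σ,τ}`: the set of weight vectors for which `(σ, τ)` is the unique pair of
bias-induced policies. -/
def Pcell {n : ℕ} (E : Finset (Fin n × Fin n)) (VMax : Finset (Fin n))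
    (σ : {i : Fin n // i ∈ VMax} → Fin n) (τ : {i : Fin n // i ∉ VMax} → Fin n) :
    Set ({e : Fin n × Fin n // e ∈ E} → ℝ) :=
  {r | BiasInduced E VMax r σ τ ∧
    ∀ σ' τ', BiasInduced E VMax r σ' τ' → σ' = σ ∧ τ' = τ}

/-- `U := ∪_{(σ,τ) ∈ Ξ} P^{σ,τ}`. -/
def Ucell {n : ℕ} (E : Finset (Fin n × Fin n)) (VMax : Finset (Fin n)) :
    Set ({e : Fin n × Fin n // e ∈ E} → ℝ) :=
  ⋃ σ, ⋃ τ, ⋃ (_ : InXi E VMax σ τ), Pcell E VMax σ τ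

/-- `(λ, u)` solves the zero-player (fixed policies) equation on the functional graph of
`f`. -/
def IsZeroPlayerSol {n : ℕ} (E : Finset (Fin n × Fin n)) (f : Fin n → Fin n)
    (r : {e : Fin n × Fin n // e ∈ E} → ℝ) (lam : ℝ) (u : Fin n → ℝ) : Prop :=
  ∀ i : Fin n, lam + u i = wt E r (i, f i) + u (f i)

/-- `(λ, u)` is the normalized solution of the zero-player equation: additionally `u`
vanishes at the smallest-index vertex of the cycle. For `(σ,τ) ∈ Ξ`, this characterizes
`(λ^{σ,τ}(r), u^{σ,τ}(r))`. -/
def IsNormalizedSol {n : ℕ} (E : Finset (Fin n × Fin n)) (f : Fin n → Fin n)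
    (r : {e : Fin n × Fin n // e ∈ E} → ℝ) (lam : ℝ) (u : Fin n → ℝ) : Prop :=
  IsZeroPlayerSol E f r lam u ∧
  ∃ k : Fin n, IsPeriodicVertex f k ∧ (∀ l, IsPeriodicVertex f l → k ≤ l) ∧ u k = 0

/-- The graph is ergodic: the ergodic equation is solvable for every choice of weights. -/
def IsErgodicGraph {n : ℕ} (E : Finset (Fin n × Fin n)) (VMax : Finset (Fin n)) : Prop :=
  ∀ r : {e : Fin n × Fin n // e ∈ E} → ℝ, ∃ lam u, IsErgodicSol E VMax r lam u


/-- The condition number `Δ(r)`. For `r ∈ U`, the solution `(λ, u)` of the ergodic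
equation is unique up to an additive constant on `u`, and this quantity equals
`max{|r_e − λ|} / min{|r_{ij} − λ + u_j − u_i| ≠ 0}`. -/
noncomputable def Delta {n : ℕ} (E : Finset (Fin n × Fin n)) (VMax : Finset (Fin n))
    (r : {e : Fin n × Fin n // e ∈ E} → ℝ) : ℝ :=
  sSup {d : ℝ | ∃ (lam : ℝ) (u : Fin n → ℝ), IsErgodicSol E VMax r lam u ∧
    d = sSup {v : ℝ | ∃ e : {e : Fin n × Fin n // e ∈ E}, v = |r e - lam|} /
        sInf {v : ℝ | ∃ e : {e : Fin n × Fin n // e ∈ E},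
          v = |r e - lam + u e.1.2 - u e.1.1| ∧ v ≠ 0}}

/-- `v` solves the Shapley equations of the discounted game with discount factor `γ`:
`v i = max_{(i,j) ∈ E} ((1−γ)r_{ij} + γ v j)` for `i ∈ VMax`, and the minimum for
`i ∈ VMin`. -/
def IsShapleySol {n : ℕ} (E : Finset (Fin n × Fin n)) (VMax : Finset (Fin n))
    (r : {e : Fin n × Fin n // e ∈ E} → ℝ) (γ : ℝ) (v : Fin n → ℝ) : Prop :=
  ∀ i : Fin n,
    (i ∈ VMax →
      IsGreatest {w : ℝ | ∃ j : Fin n, (i, j) ∈ E ∧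
        w = (1 - γ) * wt E r (i, j) + γ * v j} (v i)) ∧
    (i ∉ VMax →
      IsLeast {w : ℝ | ∃ j : Fin n, (i, j) ∈ E ∧
        w = (1 - γ) * wt E r (i, j) + γ * v j} (v i))

/-!
Let `(λ, u)` be the bias of `r` and `f` the successor map of `G^{σ,τ}`. Centre `u` on the unique
cycle of `f`; its partial sums along every orbit are then bounded by `n²·max_e |r_e − λ|`, and by
Abel summation so is `ψ = Σ_t γ^t u ∘ f^t`, which solves `ψ = u + γ ψ ∘ f`. The discounted value
of `(σ, τ)` is `w = λ + (1 − γ)(ψ − ψ ∘ f)`, and on every edge `(i, j)`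

  `w_i − (1 − γ) r_{ij} − γ w_j = (1 − γ) (λ + u_i − r_{ij} − u_j + (1 − γ)(ψ_j − ψ_{f i}))`.

Since `(σ, τ)` is the only bias-induced pair, every edge off `G^{σ,τ}` has a reduced cost of the
sign unfavourable to the owner of its tail and of size at least the denominator of `Δ(r)`; the bound
on `γ` makes the correction term smaller. Hence `w` solves the Shapley equations with `(σ, τ)`
strictly optimal, and the Shapley equations have no other solution.
-/

open Finset Function

lemma sum_range_pow_mul_eq (γ : ℝ) (z : ℕ → ℝ) (N : ℕ) :
    ∑ t ∈ range N, γ ^ t * z t = γ ^ N * ∑ t ∈ range N, z t +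
      (1 - γ) * ∑ t ∈ range N, γ ^ t * ∑ s ∈ range (t + 1), z s := by
  induction N with
  | zero => simp
  | succ N ih => simp only [sum_range_succ, ih]; ring

section Abel

variable {γ B : ℝ} {z : ℕ → ℝ}

lemma abs_sum_range_pow_mul_le (hγ0 : 0 ≤ γ) (hγ1 : γ ≤ 1)
    (hz : ∀ m, |∑ t ∈ range m, z t| ≤ B) (N : ℕ) :
    |∑ t ∈ range N, γ ^ t * z t| ≤ B := by
  have hterm : ∀ t, |γ ^ t * ∑ s ∈ range (t + 1), z s| ≤ γ ^ t * B := fun t => by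
    rw [abs_mul, abs_of_nonneg (pow_nonneg hγ0 t)]
    exact mul_le_mul_of_nonneg_left (hz _) (pow_nonneg hγ0 t)
  rw [sum_range_pow_mul_eq]
  calc _ ≤ γ ^ N * B + (1 - γ) * ∑ t ∈ range N, γ ^ t * B := by
        refine (abs_add_le _ _).trans (add_le_add ?_ ?_)
        · rw [abs_mul, abs_of_nonneg (pow_nonneg hγ0 N)]
          exact mul_le_mul_of_nonneg_left (hz N) (pow_nonneg hγ0 N)
        · rw [abs_mul, abs_of_nonneg (sub_nonneg.2 hγ1)]
          exact mul_le_mul_of_nonneg_left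
            ((abs_sum_le_sum_abs _ _).trans (sum_le_sum fun t _ => hterm t)) (sub_nonneg.2 hγ1)
    _ = B := by rw [← sum_mul, ← mul_assoc, mul_neg_geom_sum]; ring

lemma abs_le_of_hasSum_pow_mul (hγ0 : 0 ≤ γ) (hγ1 : γ ≤ 1)
    (hz : ∀ m, |∑ t ∈ range m, z t| ≤ B) {s : ℝ} (hs : HasSum (fun t => γ ^ t * z t) s) :
    |s| ≤ B :=
  le_of_tendsto' ((continuous_abs.tendsto s).comp hs.tendsto_sum_nat)
    (abs_sum_range_pow_mul_le hγ0 hγ1 hz)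

end Abel

lemma abs_sum_range_le_of_sum_window_eq_zero {z : ℕ → ℝ} {a ℓ : ℕ} {C : ℝ} (hℓ : 0 < ℓ)
    (hz : ∀ t, |z t| ≤ C) (hwin : ∀ m, a ≤ m → ∑ s ∈ range ℓ, z (m + s) = 0) (m : ℕ) :
    |∑ t ∈ range m, z t| ≤ (a + ℓ) * C := by
  induction m using Nat.strong_induction_on with
  | _ m ih =>
    by_cases hm : m ≤ a + ℓ
    · calc |∑ t ∈ range m, z t| ≤ ∑ t ∈ range m, C :=
            (abs_sum_le_sum_abs _ _).trans (sum_le_sum fun t _ => hz t)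
        _ ≤ (a + ℓ) * C := by
            rw [sum_const, card_range, nsmul_eq_mul]
            exact mul_le_mul_of_nonneg_right (by exact_mod_cast hm) ((abs_nonneg _).trans (hz 0))
    · obtain ⟨k, rfl⟩ : ∃ k, m = k + ℓ := ⟨m - ℓ, by omega⟩
      rw [sum_range_add, hwin k (by omega), add_zero]
      exact ih k (by omega)

section Iterate

variable {α : Type*} {f : α → α}

lemma sum_range_iterate_apply_iterate {M : Type*} [AddCancelCommMonoid M] {ℓ : ℕ} {c : α}
    (hc : IsPeriodicPt f ℓ c) (u : α → M) (k : ℕ) :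
    ∑ s ∈ range ℓ, u (f^[s] (f^[k] c)) = ∑ s ∈ range ℓ, u (f^[s] c) := by
  induction k with
  | zero => rfl
  | succ k ih =>
    have hrot := sum_range_succ' (fun s => u (f^[s] (f^[k] c))) ℓ
    rw [sum_range_succ, (hc.apply_iterate k).eq] at hrot
    rw [iterate_zero_apply, add_left_inj] at hrot
    rw [← ih, hrot, iterate_succ_apply' f k]
    simp only [← iterate_succ_apply]

lemma abs_sub_iterate_le {u : α → ℝ} {A : ℝ} (hA : ∀ x, |u x - u (f x)| ≤ A) (k : ℕ) (x : α) :
    |u x - u (f^[k] x)| ≤ k * A := by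
  induction k with
  | zero => simp
  | succ k ih =>
    rw [iterate_succ_apply']
    calc |u x - u (f (f^[k] x))| ≤ |u x - u (f^[k] x)| + |u (f^[k] x) - u (f (f^[k] x))| :=
          abs_sub_le _ _ _
      _ ≤ k * A + A := add_le_add ih (hA _)
      _ = (k + 1 : ℕ) * A := by push_cast; ring

end Iterate

section DiscountedSum

variable {α : Type*} {f : α → α} {u : α → ℝ} {γ : ℝ}

lemma summable_pow_mul_comp_iterate [Fintype α] (hγ0 : 0 ≤ γ) (hγ1 : γ < 1) (y : α) :
    Summable fun t => γ ^ t * u (f^[t] y) :=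
  Summable.of_norm_bounded ((summable_geometric_of_lt_one hγ0 hγ1).mul_left ‖u‖) fun t => by
    rw [norm_mul, norm_pow, Real.norm_of_nonneg hγ0, mul_comm]
    exact mul_le_mul_of_nonneg_right (norm_le_pi_norm u _) (pow_nonneg hγ0 t)

lemma tsum_pow_mul_comp_iterate_eq {y : α} (h : Summable fun t => γ ^ t * u (f^[t] y)) :
    ∑' t, γ ^ t * u (f^[t] y) = u y + γ * ∑' t, γ ^ t * u (f^[t] (f y)) := by
  rw [h.tsum_eq_zero_add, ← tsum_mul_left]
  simp only [pow_zero, one_mul, iterate_zero_apply, iterate_succ_apply, pow_succ]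
  congr 1
  exact tsum_congr fun t => by ring

end DiscountedSum

noncomputable def orbitMean {α : Type*} (f : α → α) (u : α → ℝ) (c : α) : ℝ :=
  (∑ s ∈ range (minimalPeriod f c), u (f^[s] c)) / minimalPeriod f c

lemma sum_range_sub_orbitMean {α : Type*} {f : α → α} {c : α} (hc : c ∈ periodicPts f)
    (u : α → ℝ) : ∑ s ∈ range (minimalPeriod f c), (u (f^[s] c) - orbitMean f u c) = 0 := by
  have hℓ : (minimalPeriod f c : ℝ) ≠ 0 := by
    exact_mod_cast (minimalPeriod_pos_of_mem_periodicPts hc).ne'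
  rw [sum_sub_distrib, sum_const, card_range, nsmul_eq_mul, orbitMean, mul_div_cancel₀ _ hℓ,
    sub_self]

lemma exists_isPeriodicPt_iterate {n : ℕ} (f : Fin n → Fin n) (x : Fin n) :
    ∃ a ℓ : ℕ, 0 < ℓ ∧ a + ℓ ≤ n ∧ IsPeriodicPt f ℓ (f^[a] x) := by
  obtain ⟨s, t, hst, heq⟩ := Fintype.exists_ne_map_eq_of_card_lt
    (fun t : Fin (n + 1) => f^[t] x) (by simp)
  wlog hlt : s < t generalizing s t
  · exact this t s hst.symm heq.symm (lt_of_le_of_ne (not_lt.1 hlt) hst.symm)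
  have hlt' : (s : ℕ) < t := hlt
  have ht := t.isLt
  refine ⟨s, t - s, by omega, by omega, ?_⟩
  change f^[(t : ℕ) - s] (f^[s] x) = f^[s] x
  rw [← iterate_add_apply, Nat.sub_add_cancel hlt'.le]
  exact heq.symm

namespace HasUniqueCycle

variable {n : ℕ} {f : Fin n → Fin n} {c : Fin n}

lemma exists_iterate_eq_iterate (hf : HasUniqueCycle f) (hc : c ∈ periodicPts f) (x : Fin n) :
    ∃ a k : ℕ, a + minimalPeriod f c ≤ n ∧ f^[a] x = f^[k] c := by
  obtain ⟨a, ℓ, hℓ, hle, hper⟩ := exists_isPeriodicPt_iterate f x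
  obtain ⟨k, hk⟩ := hf c _ hc ⟨ℓ, hℓ, hper⟩
  refine ⟨a, k, ?_, hk.symm⟩
  have hmin := hper.minimalPeriod_le hℓ
  rw [← hk, minimalPeriod_apply_iterate hc] at hmin
  omega

lemma apply_eq_apply {β : Type*} (hf : HasUniqueCycle f) {h : Fin n → β}
    (hh : ∀ x, h (f x) = h x) (x y : Fin n) : h x = h y := by
  have hiter : ∀ k z, h (f^[k] z) = h z := fun k z => by
    induction k with
    | zero => rfl
    | succ k ih => rw [iterate_succ_apply', hh, ih]
  obtain ⟨a, ℓ, hℓ, -, hper⟩ := exists_isPeriodicPt_iterate f x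
  obtain ⟨b, k, -, hb⟩ := hf.exists_iterate_eq_iterate ⟨ℓ, hℓ, hper⟩ y
  rw [← hiter b y, hb, hiter, hiter]

variable {u : Fin n → ℝ} {A : ℝ}

lemma abs_le_of_sum_orbit_eq_zero (hf : HasUniqueCycle f) (hc : c ∈ periodicPts f)
    (hu : ∑ s ∈ range (minimalPeriod f c), u (f^[s] c) = 0) (hA : ∀ x, |u x - u (f x)| ≤ A)
    (x : Fin n) : |u x| ≤ n * A := by
  set ℓ := minimalPeriod f c
  have hℓ : 0 < ℓ := minimalPeriod_pos_of_mem_periodicPts hc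
  have hA0 : 0 ≤ A := (abs_nonneg _).trans (hA x)
  obtain ⟨a, k, hle, hak⟩ := hf.exists_iterate_eq_iterate hc x
  set p := f^[k] c
  have hmean : ℓ * u p = ∑ s ∈ range ℓ, (u p - u (f^[s] p)) := by
    rw [sum_sub_distrib, sum_range_iterate_apply_iterate (isPeriodicPt_minimalPeriod f c) u k,
      hu, sum_const, card_range, nsmul_eq_mul, sub_zero]
  have hp : |u p| ≤ ℓ * A := by
    have hsum : |(ℓ : ℝ) * u p| ≤ ℓ * (ℓ * A) := by
      rw [hmean]
      calc _ ≤ ∑ s ∈ range ℓ, (ℓ : ℝ) * A := (abs_sum_le_sum_abs _ _).trans <|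
              sum_le_sum fun s hs => (abs_sub_iterate_le hA s p).trans <|
                mul_le_mul_of_nonneg_right (by exact_mod_cast (mem_range.1 hs).le) hA0
        _ = ℓ * (ℓ * A) := by rw [sum_const, card_range, nsmul_eq_mul]
    rw [abs_mul, Nat.abs_cast] at hsum
    exact le_of_mul_le_mul_left hsum (by exact_mod_cast hℓ)
  have hx := abs_sub_iterate_le hA a x
  rw [hak] at hx
  calc |u x| ≤ |u x - u p| + |u p| := by linarith [abs_sub_abs_le_abs_sub (u x) (u p)]
    _ ≤ a * A + ℓ * A := add_le_add hx hp
    _ ≤ n * A := by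
        rw [← add_mul]
        exact mul_le_mul_of_nonneg_right (by exact_mod_cast hle) hA0

lemma abs_sum_range_iterate_le (hf : HasUniqueCycle f) (hc : c ∈ periodicPts f)
    (hu : ∑ s ∈ range (minimalPeriod f c), u (f^[s] c) = 0) (hA : ∀ x, |u x - u (f x)| ≤ A)
    (x : Fin n) (m : ℕ) : |∑ t ∈ range m, u (f^[t] x)| ≤ n * (n * A) := by
  obtain ⟨a, k, hle, hak⟩ := hf.exists_iterate_eq_iterate hc x
  have hwin : ∀ m, a ≤ m → ∑ s ∈ range (minimalPeriod f c), u (f^[m + s] x) = 0 := by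
    intro m hm
    obtain ⟨d, rfl⟩ := Nat.exists_eq_add_of_le hm
    have hshift : ∀ s, f^[a + d + s] x = f^[s] (f^[d + k] c) := fun s => by
      rw [show a + d + s = s + d + a by omega, iterate_add_apply, iterate_add_apply, hak,
        ← iterate_add_apply f d]
    simp only [hshift]
    rw [sum_range_iterate_apply_iterate (isPeriodicPt_minimalPeriod f c), hu]
  calc _ ≤ (a + minimalPeriod f c) * (n * A) :=
        abs_sum_range_le_of_sum_window_eq_zero (minimalPeriod_pos_of_mem_periodicPts hc)
          (fun t => hf.abs_le_of_sum_orbit_eq_zero hc hu hA _) hwin m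
    _ ≤ n * (n * A) := mul_le_mul_of_nonneg_right (by exact_mod_cast hle)
        (mul_nonneg n.cast_nonneg ((abs_nonneg _).trans (hA x)))

lemma abs_sub_le_of_abs_sub_apply_le (hf : HasUniqueCycle f) (hc : c ∈ periodicPts f)
    (hA : ∀ x, |u x - u (f x)| ≤ A) (x y : Fin n) : |u x - u y| ≤ 2 * (n * A) := by
  set v := fun x => u x - orbitMean f u c
  have hvA : ∀ x, |v x - v (f x)| ≤ A := by simpa [v] using hA
  have hv := hf.abs_le_of_sum_orbit_eq_zero hc (sum_range_sub_orbitMean hc u) hvA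
  calc |u x - u y| = |v x - v y| := by simp [v]
    _ ≤ |v x| + |v y| := abs_sub _ _
    _ ≤ 2 * (n * A) := by linarith [hv x, hv y]

lemma exists_potential (hf : HasUniqueCycle f) (hc : c ∈ periodicPts f)
    (hA : ∀ x, |u x - u (f x)| ≤ A) {γ : ℝ} (hγ0 : 0 ≤ γ) (hγ1 : γ < 1) :
    ∃ ψ : Fin n → ℝ, (∀ y, ψ y = u y + γ * ψ (f y)) ∧
      ∀ y z, |ψ y - ψ z| ≤ 2 * (n * (n * A)) := by
  set μ := orbitMean f u c
  set v := fun x => u x - μ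
  have hvA : ∀ x, |v x - v (f x)| ≤ A := by simpa [v] using hA
  have hsum := summable_pow_mul_comp_iterate (f := f) (u := v) hγ0 hγ1
  have hbound : ∀ y, |∑' t, γ ^ t * v (f^[t] y)| ≤ n * (n * A) := fun y =>
    abs_le_of_hasSum_pow_mul hγ0 hγ1.le
      (hf.abs_sum_range_iterate_le hc (sum_range_sub_orbitMean hc u) hvA y) (hsum y).hasSum
  refine ⟨fun y => ∑' t, γ ^ t * v (f^[t] y) + μ / (1 - γ), fun y => ?_, fun y z => ?_⟩
  · have h1γ : 1 - γ ≠ 0 := by linarith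
    dsimp only
    rw [tsum_pow_mul_comp_iterate_eq (hsum y)]
    field_simp
    ring
  · rw [add_sub_add_right_eq_sub]
    linarith [abs_sub (∑' t, γ ^ t * v (f^[t] y)) (∑' t, γ ^ t * v (f^[t] z)), hbound y, hbound z]

end HasUniqueCycle

section Game

variable {n : ℕ} {E : Finset (Fin n × Fin n)} {VMax : Finset (Fin n)}
  {r : {e : Fin n × Fin n // e ∈ E} → ℝ}
  {σ : {i : Fin n // i ∈ VMax} → Fin n} {τ : {i : Fin n // i ∉ VMax} → Fin n}
  {f : Fin n → Fin n} {lam : ℝ} {u : Fin n → ℝ}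

lemma wt_of_mem {p : Fin n × Fin n} (hp : p ∈ E) : wt E r p = r ⟨p, hp⟩ := dif_pos hp

lemma combine_mem (hσ : IsMaxPolicy E VMax σ) (hτ : IsMinPolicy E VMax τ) (x : Fin n) :
    (x, combine VMax σ τ x) ∈ E := by
  unfold combine
  split_ifs with hx
  · exact hσ ⟨x, hx⟩
  · exact hτ ⟨x, hx⟩

lemma Induces.isZeroPlayerSol (hind : Induces E VMax r u σ τ)
    (hsol : IsErgodicSol E VMax r lam u) : IsZeroPlayerSol E (combine VMax σ τ) r lam u := by
  intro x
  unfold combine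
  split_ifs with hx
  · exact ((hsol x).1 hx).unique (hind.2.2.1 ⟨x, hx⟩)
  · exact ((hsol x).2 hx).unique (hind.2.2.2 ⟨x, hx⟩)

lemma HasUniqueCycle.sub_eq_sub_of_isZeroPlayerSol (hf : HasUniqueCycle f) {u' : Fin n → ℝ}
    (h : IsZeroPlayerSol E f r lam u) (h' : IsZeroPlayerSol E f r lam u') (x y : Fin n) :
    u' y - u' x = u y - u x := by
  have := hf.apply_eq_apply (h := fun z => u' z - u z) (fun z => by linarith [h z, h' z]) x y
  linarith

lemma IsErgodicSol.value_le [Nonempty (Fin n)] {lam' : ℝ} {u' : Fin n → ℝ}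
    (h : IsErgodicSol E VMax r lam u) (h' : IsErgodicSol E VMax r lam' u') : lam ≤ lam' := by
  obtain ⟨i, hmax⟩ := Finite.exists_max fun x => u x - u' x
  by_cases hi : i ∈ VMax
  · obtain ⟨j, hj, hje⟩ := ((h i).1 hi).1
    linarith [((h' i).1 hi).2 ⟨j, hj, rfl⟩, hmax j]
  · obtain ⟨j, hj, hje⟩ := ((h' i).2 hi).1
    linarith [((h i).2 hi).2 ⟨j, hj, rfl⟩, hmax j]

lemma induces_of_mem_Pcell (hr : r ∈ Pcell E VMax σ τ) (hsol : IsErgodicSol E VMax r lam u) :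
    Induces E VMax r u σ τ := by
  choose σ' hσ' using fun k : {i // i ∈ VMax} => ((hsol k.1).1 k.2).1
  choose τ' hτ' using fun k : {i // i ∉ VMax} => ((hsol k.1).2 k.2).1
  have hind : Induces E VMax r u σ' τ' :=
    ⟨fun k => (hσ' k).1, fun k => (hτ' k).1,
      fun k => by rw [← (hσ' k).2]; exact (hsol k.1).1 k.2,
      fun k => by rw [← (hτ' k).2]; exact (hsol k.1).2 k.2⟩
  obtain ⟨rfl, rfl⟩ := hr.2 σ' τ' ⟨lam, u, hsol, hind⟩
  exact hind

/-- Any other edge attaining the maximum would give a second bias-induced pair. -/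
lemma eq_maxPolicy_of_mem_Pcell (hr : r ∈ Pcell E VMax σ τ) (hsol : IsErgodicSol E VMax r lam u)
    {x j : Fin n} (hx : x ∈ VMax) (hj : (x, j) ∈ E) (heq : lam + u x = wt E r (x, j) + u j) :
    j = σ ⟨x, hx⟩ := by
  have hind := induces_of_mem_Pcell hr hsol
  have hind' : Induces E VMax r u (update σ ⟨x, hx⟩ j) τ := by
    refine ⟨fun k => ?_, hind.2.1, fun k => ?_, hind.2.2.2⟩
    · rcases eq_or_ne k ⟨x, hx⟩ with rfl | hk
      · rwa [update_self]
      · rw [update_of_ne hk]; exact hind.1 k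
    · rcases eq_or_ne k ⟨x, hx⟩ with rfl | hk
      · rw [update_self, ← heq]; exact (hsol x).1 hx
      · rw [update_of_ne hk]; exact hind.2.2.1 k
  have := congrFun (hr.2 _ τ ⟨lam, u, hsol, hind'⟩).1 ⟨x, hx⟩
  rwa [update_self] at this

lemma eq_minPolicy_of_mem_Pcell (hr : r ∈ Pcell E VMax σ τ) (hsol : IsErgodicSol E VMax r lam u)
    {x j : Fin n} (hx : x ∉ VMax) (hj : (x, j) ∈ E) (heq : lam + u x = wt E r (x, j) + u j) :
    j = τ ⟨x, hx⟩ := by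
  have hind := induces_of_mem_Pcell hr hsol
  have hind' : Induces E VMax r u σ (update τ ⟨x, hx⟩ j) := by
    refine ⟨hind.1, fun k => ?_, hind.2.2.1, fun k => ?_⟩
    · rcases eq_or_ne k ⟨x, hx⟩ with rfl | hk
      · rwa [update_self]
      · rw [update_of_ne hk]; exact hind.2.1 k
    · rcases eq_or_ne k ⟨x, hx⟩ with rfl | hk
      · rw [update_self, ← heq]; exact (hsol x).2 hx
      · rw [update_of_ne hk]; exact hind.2.2.2 k
  have := congrFun (hr.2 σ _ ⟨lam, u, hsol, hind'⟩).2 ⟨x, hx⟩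
  rwa [update_self] at this

end Game

section ConditionNumber

variable {n : ℕ} {E : Finset (Fin n × Fin n)} {VMax : Finset (Fin n)}
  {r : {e : Fin n × Fin n // e ∈ E} → ℝ}
  {σ : {i : Fin n // i ∈ VMax} → Fin n} {τ : {i : Fin n // i ∉ VMax} → Fin n}
  {f : Fin n → Fin n} {lam : ℝ} {u : Fin n → ℝ}

/-- Numerator of the condition number `Δ(r)`. -/
noncomputable def maxDev (E : Finset (Fin n × Fin n)) (r : {e : Fin n × Fin n // e ∈ E} → ℝ)
    (lam : ℝ) : ℝ :=
  sSup {v : ℝ | ∃ e : {e : Fin n × Fin n // e ∈ E}, v = |r e - lam|}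

/-- Denominator of `Δ(r)`; it is `0` when every reduced cost vanishes. -/
noncomputable def minGap (E : Finset (Fin n × Fin n)) (r : {e : Fin n × Fin n // e ∈ E} → ℝ)
    (lam : ℝ) (u : Fin n → ℝ) : ℝ :=
  sInf {v : ℝ | ∃ e : {e : Fin n × Fin n // e ∈ E},
    v = |r e - lam + u e.1.2 - u e.1.1| ∧ v ≠ 0}

lemma maxDev_nonneg : 0 ≤ maxDev E r lam :=
  Real.sSup_nonneg <| by rintro _ ⟨e, rfl⟩; exact abs_nonneg _

lemma abs_sub_le_maxDev (e : {e : Fin n × Fin n // e ∈ E}) : |r e - lam| ≤ maxDev E r lam :=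
  le_csSup ((Set.finite_range fun e => |r e - lam|).subset
    (by rintro _ ⟨e, rfl⟩; exact ⟨e, rfl⟩)).bddAbove ⟨e, rfl⟩

lemma minGap_nonneg : 0 ≤ minGap E r lam u :=
  Real.sInf_nonneg <| by rintro _ ⟨e, rfl, -⟩; exact abs_nonneg _

lemma minGap_le (e : {e : Fin n × Fin n // e ∈ E}) (he : |r e - lam + u e.1.2 - u e.1.1| ≠ 0) :
    minGap E r lam u ≤ |r e - lam + u e.1.2 - u e.1.1| :=
  csInf_le ⟨0, by rintro _ ⟨e, rfl, -⟩; exact abs_nonneg _⟩ ⟨e, rfl, he⟩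

lemma minGap_le_abs_gap {x j : Fin n} (hj : (x, j) ∈ E)
    (hgap : lam + u x - wt E r (x, j) - u j ≠ 0) :
    minGap E r lam u ≤ |lam + u x - wt E r (x, j) - u j| := by
  have heq : |r ⟨(x, j), hj⟩ - lam + u j - u x| = |lam + u x - wt E r (x, j) - u j| := by
    rw [wt_of_mem hj, ← abs_neg]
    ring_nf
  rw [← heq]
  exact minGap_le ⟨(x, j), hj⟩ (heq ▸ abs_ne_zero.2 hgap)

lemma minGap_le_of_forall_le {B : ℝ} (hB0 : 0 ≤ B)
    (hB : ∀ e : {e : Fin n × Fin n // e ∈ E}, |r e - lam + u e.1.2 - u e.1.1| ≤ B) :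
    minGap E r lam u ≤ B := by
  rcases Set.eq_empty_or_nonempty {v : ℝ | ∃ e : {e : Fin n × Fin n // e ∈ E},
      v = |r e - lam + u e.1.2 - u e.1.1| ∧ v ≠ 0} with h | ⟨_, e, rfl, he⟩
  · rw [minGap, h, Real.sInf_empty]
    exact hB0
  · exact (minGap_le e he).trans (hB e)

lemma minGap_congr {u' : Fin n → ℝ} (h : ∀ x y, u' y - u' x = u y - u x) :
    minGap E r lam u' = minGap E r lam u := by
  have he : ∀ e : {e : Fin n × Fin n // e ∈ E},
      r e - lam + u' e.1.2 - u' e.1.1 = r e - lam + u e.1.2 - u e.1.1 := fun e => by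
    linarith [h e.1.1 e.1.2]
  simp only [minGap, he]

lemma IsZeroPlayerSol.abs_sub_apply_le (hfE : ∀ x, (x, f x) ∈ E)
    (hzp : IsZeroPlayerSol E f r lam u) (x : Fin n) : |u x - u (f x)| ≤ maxDev E r lam := by
  have := abs_sub_le_maxDev (r := r) (lam := lam) ⟨(x, f x), hfE x⟩
  rwa [← wt_of_mem (r := r) (hfE x), show wt E r (x, f x) - lam = u x - u (f x) by linarith [hzp x]]
    at this

/-- In terms of the condition number, `Δ(r) ≥ 1/(2n+1)`; this is what makes `γ` positive. -/
lemma minGap_le_maxDev (hf : HasUniqueCycle f) (hfE : ∀ x, (x, f x) ∈ E)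
    (hzp : IsZeroPlayerSol E f r lam u) {c : Fin n} (hc : c ∈ periodicPts f) :
    minGap E r lam u ≤ maxDev E r lam + 2 * (n * maxDev E r lam) := by
  have hA := maxDev_nonneg (r := r) (lam := lam)
  refine minGap_le_of_forall_le (by positivity) fun e => ?_
  calc |r e - lam + u e.1.2 - u e.1.1| ≤ |r e - lam| + |u e.1.2 - u e.1.1| := by
        rw [add_sub_assoc]; exact abs_add_le _ _
    _ ≤ _ := add_le_add (abs_sub_le_maxDev e)
        (hf.abs_sub_le_of_abs_sub_apply_le hc (hzp.abs_sub_apply_le hfE) _ _)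

lemma Delta_eq_of_mem_Pcell [Nonempty (Fin n)] (hf : HasUniqueCycle (combine VMax σ τ))
    (hr : r ∈ Pcell E VMax σ τ) (hsol : IsErgodicSol E VMax r lam u) :
    Delta E VMax r = maxDev E r lam / minGap E r lam u := by
  change sSup {d | ∃ lam' u', IsErgodicSol E VMax r lam' u' ∧
    d = maxDev E r lam' / minGap E r lam' u'} = _
  rw [← csSup_singleton (maxDev E r lam / minGap E r lam u)]
  congr 1
  refine Set.eq_singleton_iff_unique_mem.2 ⟨?_, ?_⟩
  · exact ⟨lam, u, hsol, rfl⟩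
  rintro _ ⟨lam', u', hsol', rfl⟩
  obtain rfl : lam' = lam := le_antisymm (hsol'.value_le hsol) (hsol.value_le hsol')
  rw [minGap_congr (hf.sub_eq_sub_of_isZeroPlayerSol
    ((induces_of_mem_Pcell hr hsol).isZeroPlayerSol hsol)
    ((induces_of_mem_Pcell hr hsol').isZeroPlayerSol hsol'))]

end ConditionNumber

section Discounted

variable {n : ℕ} {E : Finset (Fin n × Fin n)} {VMax : Finset (Fin n)}
  {r : {e : Fin n × Fin n // e ∈ E} → ℝ} {γ : ℝ} {f : Fin n → Fin n} {w v : Fin n → ℝ}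

lemma IsShapleySol.le (hγ0 : 0 ≤ γ) (hγ1 : γ < 1) (hw : IsShapleySol E VMax r γ w)
    (hv : IsShapleySol E VMax r γ v) (x : Fin n) : w x ≤ v x := by
  have : Nonempty (Fin n) := ⟨x⟩
  obtain ⟨i, hmax⟩ := Finite.exists_max fun y => w y - v y
  suffices w i - v i ≤ 0 by linarith [hmax x]
  by_cases hi : i ∈ VMax
  · obtain ⟨j, hj, hje⟩ := ((hw i).1 hi).1
    nlinarith [((hv i).1 hi).2 ⟨j, hj, rfl⟩, hmax j]
  · obtain ⟨j, hj, hje⟩ := ((hv i).2 hi).1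
    nlinarith [((hw i).2 hi).2 ⟨j, hj, rfl⟩, hmax j]

def IsStrictlyOptimal (E : Finset (Fin n × Fin n)) (VMax : Finset (Fin n))
    (r : {e : Fin n × Fin n // e ∈ E} → ℝ) (γ : ℝ) (f : Fin n → Fin n) (w : Fin n → ℝ) : Prop :=
  ∀ x, (x, f x) ∈ E ∧ w x = (1 - γ) * wt E r (x, f x) + γ * w (f x) ∧
    ∀ j, (x, j) ∈ E → j ≠ f x →
      (x ∈ VMax → (1 - γ) * wt E r (x, j) + γ * w j < w x) ∧
      (x ∉ VMax → w x < (1 - γ) * wt E r (x, j) + γ * w j)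

lemma IsStrictlyOptimal.isShapleySol (hw : IsStrictlyOptimal E VMax r γ f w) :
    IsShapleySol E VMax r γ w := by
  intro x
  obtain ⟨hfx, heq, hlt⟩ := hw x
  refine ⟨fun hx => ⟨⟨f x, hfx, heq⟩, ?_⟩, fun hx => ⟨⟨f x, hfx, heq⟩, ?_⟩⟩ <;>
    rintro _ ⟨j, hj, rfl⟩ <;> rcases eq_or_ne j (f x) with rfl | hne
  · exact heq.ge
  · exact ((hlt j hj hne).1 hx).le
  · exact heq.le
  · exact ((hlt j hj hne).2 hx).le

lemma IsStrictlyOptimal.attains_iff (hw : IsStrictlyOptimal E VMax r γ f w) (hγ0 : 0 ≤ γ)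
    (hγ1 : γ < 1) (hv : IsShapleySol E VMax r γ v) (x j : Fin n) :
    ((x, j) ∈ E ∧ v x = (1 - γ) * wt E r (x, j) + γ * v j) ↔ j = f x := by
  obtain rfl : v = w := funext fun y =>
    le_antisymm (hv.le hγ0 hγ1 hw.isShapleySol y) (hw.isShapleySol.le hγ0 hγ1 hv y)
  refine ⟨fun ⟨hj, heq⟩ => ?_, fun h => h ▸ ⟨(hw x).1, (hw x).2.1⟩⟩
  by_contra hne
  by_cases hx : x ∈ VMax
  · exact ((hw x).2.2 j hj hne).1 hx |>.ne' heq
  · exact ((hw x).2.2 j hj hne).2 hx |>.ne heq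

lemma isStrictlyOptimal_of_potential {lam δ B : ℝ} {u ψ : Fin n → ℝ}
    (hfE : ∀ x, (x, f x) ∈ E) (hzp : IsZeroPlayerSol E f r lam u)
    (hψ : ∀ y, ψ y = u y + γ * ψ (f y)) (hψB : ∀ y z, |ψ y - ψ z| ≤ B)
    (hgap : ∀ x j, (x, j) ∈ E → j ≠ f x →
      (x ∈ VMax → δ ≤ lam + u x - wt E r (x, j) - u j) ∧
      (x ∉ VMax → δ ≤ -(lam + u x - wt E r (x, j) - u j)))
    (hγ1 : γ < 1) (hB : (1 - γ) * B < δ) :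
    IsStrictlyOptimal E VMax r γ f fun x => lam + (1 - γ) * (ψ x - ψ (f x)) := by
  have h1γ : 0 < 1 - γ := sub_pos.2 hγ1
  have key : ∀ x j, lam + (1 - γ) * (ψ x - ψ (f x)) -
      ((1 - γ) * wt E r (x, j) + γ * (lam + (1 - γ) * (ψ j - ψ (f j)))) =
      (1 - γ) * ((lam + u x - wt E r (x, j) - u j) + (1 - γ) * (ψ j - ψ (f x))) :=
    fun x j => by linear_combination (1 - γ) * hψ x - (1 - γ) * hψ j
  intro x
  refine ⟨hfE x, ?_, fun j hj hne => ?_⟩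
  · have := key x (f x)
    rw [hzp x] at this
    linarith
  have hsmall : |(1 - γ) * (ψ j - ψ (f x))| < δ := by
    rw [abs_mul, abs_of_pos h1γ]
    exact (mul_le_mul_of_nonneg_left (hψB j (f x)) h1γ.le).trans_lt hB
  refine ⟨fun hx => ?_, fun hx => ?_⟩
  · have := mul_pos h1γ (by linarith [(hgap x j hj hne).1 hx, abs_lt.1 hsmall] :
      0 < (lam + u x - wt E r (x, j) - u j) + (1 - γ) * (ψ j - ψ (f x)))
    linarith [key x j]
  · have := mul_pos h1γ (by linarith [(hgap x j hj hne).2 hx, abs_lt.1 hsmall] :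
      0 < -((lam + u x - wt E r (x, j) - u j) + (1 - γ) * (ψ j - ψ (f x))))
    linarith [key x j]

end Discounted

lemma discount_factor_bounds {N A δ γ : ℝ} (hN : 1 ≤ N) (hA : 0 ≤ A) (hδ : 0 ≤ δ)
    (hδA : δ ≤ A + 2 * (N * A)) (hγ1 : γ < 1) (hγ2 : 1 - 1 / (6 * N ^ 2 * (A / δ)) < γ) :
    0 ≤ γ ∧ (1 - γ) * (6 * N ^ 2 * A) < δ := by
  rw [← mul_div_assoc] at hγ2
  have hD : 0 < 6 * N ^ 2 * A / δ := by
    by_contra h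
    have : 1 / (6 * N ^ 2 * A / δ) ≤ 0 := one_div_nonpos.2 (not_lt.1 h)
    linarith
  have hδ0 : 0 < δ := lt_of_le_of_ne hδ fun h => by simp [← h] at hD
  have hlt : (1 - γ) * (6 * N ^ 2 * A / δ) < 1 := by
    have := (lt_div_iff₀ hD).1 (by linarith : 1 - γ < 1 / (6 * N ^ 2 * A / δ))
    linarith
  rw [mul_div_assoc', div_lt_one hδ0] at hlt
  refine ⟨?_, hlt⟩
  by_contra! hγ0
  have h6 : A + 2 * (N * A) ≤ 6 * N ^ 2 * A := by nlinarith
  nlinarith [mul_nonneg (neg_nonneg.2 hγ0.le) (by positivity : 0 ≤ 6 * N ^ 2 * A)]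

section Main

variable {n : ℕ} {E : Finset (Fin n × Fin n)} {VMax : Finset (Fin n)}
  {r : {e : Fin n × Fin n // e ∈ E} → ℝ}
  {σ : {i : Fin n // i ∈ VMax} → Fin n} {τ : {i : Fin n // i ∉ VMax} → Fin n}

lemma le_gap_of_mem_Pcell {lam : ℝ} {u : Fin n → ℝ} (hr : r ∈ Pcell E VMax σ τ)
    (hsol : IsErgodicSol E VMax r lam u) {x j : Fin n} (hj : (x, j) ∈ E)
    (hne : j ≠ combine VMax σ τ x) :
    (x ∈ VMax → minGap E r lam u ≤ lam + u x - wt E r (x, j) - u j) ∧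
    (x ∉ VMax → minGap E r lam u ≤ -(lam + u x - wt E r (x, j) - u j)) := by
  have hgap : lam + u x - wt E r (x, j) - u j ≠ 0 := by
    intro h
    apply hne
    unfold combine
    split_ifs with hx
    · exact eq_maxPolicy_of_mem_Pcell hr hsol hx hj (by linarith)
    · exact eq_minPolicy_of_mem_Pcell hr hsol hx hj (by linarith)
  have hle := minGap_le_abs_gap hj hgap
  refine ⟨fun hx => ?_, fun hx => ?_⟩
  · rwa [abs_of_nonneg (by linarith [((hsol x).1 hx).2 ⟨j, hj, rfl⟩])] at hle
  · rwa [abs_of_nonpos (by linarith [((hsol x).2 hx).2 ⟨j, hj, rfl⟩])] at hle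

theorem attains_iff_of_mem_Pcell (hXi : InXi E VMax σ τ) (hr : r ∈ Pcell E VMax σ τ) {γ : ℝ}
    (hγ1 : γ < 1) (hγ2 : 1 - 1 / (6 * n ^ 2 * Delta E VMax r) < γ) {v : Fin n → ℝ}
    (hv : IsShapleySol E VMax r γ v) (x j : Fin n) :
    ((x, j) ∈ E ∧ v x = (1 - γ) * wt E r (x, j) + γ * v j) ↔ j = combine VMax σ τ x := by
  have : Nonempty (Fin n) := ⟨x⟩
  obtain ⟨lam, u, hsol, hind⟩ := hr.1
  have hzp := hind.isZeroPlayerSol hsol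
  have hfE := combine_mem hXi.1 hXi.2.1
  obtain ⟨a, ℓ, hℓ, -, hper⟩ := exists_isPeriodicPt_iterate (combine VMax σ τ) x
  have hc : (combine VMax σ τ)^[a] x ∈ periodicPts (combine VMax σ τ) := ⟨ℓ, hℓ, hper⟩
  rw [Delta_eq_of_mem_Pcell hXi.2.2 hr hsol] at hγ2
  obtain ⟨hγ0, hsmall⟩ := discount_factor_bounds (Nat.one_le_cast.2 x.pos) maxDev_nonneg
    minGap_nonneg (minGap_le_maxDev hXi.2.2 hfE hzp hc) hγ1 hγ2
  obtain ⟨ψ, hψ, hψB⟩ := hXi.2.2.exists_potential hc (hzp.abs_sub_apply_le hfE) hγ0 hγ1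
  refine (isStrictlyOptimal_of_potential hfE hzp hψ hψB (fun _ _ hj hne =>
    le_gap_of_mem_Pcell hr hsol hj hne) hγ1 ?_).attains_iff hγ0 hγ1 hv x j
  nlinarith [mul_nonneg (sub_nonneg.2 hγ1.le) (mul_nonneg (sq_nonneg (n : ℝ))
    (maxDev_nonneg (r := r) (lam := lam)))]

end Main

theorem stmt18_general (n : ℕ) (E : Finset (Fin n × Fin n)) (VMax : Finset (Fin n))
    (σ : {i : Fin n // i ∈ VMax} → Fin n) (τ : {i : Fin n // i ∉ VMax} → Fin n)
    (hXi : InXi E VMax σ τ)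
    (r : {e : Fin n × Fin n // e ∈ E} → ℝ) (hr : r ∈ Pcell E VMax σ τ)
    (γ : ℝ) (hγ1 : γ < 1) (hγ2 : 1 - 1 / (6 * n ^ 2 * Delta E VMax r) < γ) :
    ∀ v : Fin n → ℝ, IsShapleySol E VMax r γ v → ∀ i : Fin n,
      (∀ h : i ∈ VMax, ∀ j : Fin n,
        ((i, j) ∈ E ∧ v i = (1 - γ) * wt E r (i, j) + γ * v j) ↔ j = σ ⟨i, h⟩) ∧
      (∀ h : i ∉ VMax, ∀ j : Fin n,
        ((i, j) ∈ E ∧ v i = (1 - γ) * wt E r (i, j) + γ * v j) ↔ j = τ ⟨i, h⟩) := by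
  intro v hv i
  have key := attains_iff_of_mem_Pcell hXi hr hγ1 hγ2 hv i
  exact ⟨fun h j => by simpa only [combine, dif_pos h] using key j,
    fun h j => by simpa only [combine, dif_neg h] using key j⟩

/-- If `r ∈ P^{σ,τ}` with `(σ,τ) ∈ Ξ` and
`1 > γ > 1 − 1/(6n²Δ(r))`, then `(σ,τ)` is the unique pair of optimal policies of the
discounted game with discount factor `γ`: in the Shapley equations, the maximum at each
Max vertex `i` is achieved only by the edge `(i,σ(i))`, and the minimum at each Min vertex
`i` only by `(i,τ(i))`. -/
theorem stmt18 (n : ℕ) (E : Finset (Fin n × Fin n)) (VMax : Finset (Fin n))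
    (hout : ∀ i : Fin n, ∃ j : Fin n, (i, j) ∈ E)
    (herg : IsErgodicGraph E VMax)
    (σ : {i : Fin n // i ∈ VMax} → Fin n) (τ : {i : Fin n // i ∉ VMax} → Fin n)
    (hXi : InXi E VMax σ τ)
    (r : {e : Fin n × Fin n // e ∈ E} → ℝ) (hr : r ∈ Pcell E VMax σ τ)
    (γ : ℝ) (hγ1 : γ < 1) (hγ2 : 1 - 1 / (6 * n ^ 2 * Delta E VMax r) < γ) :
    ∀ v : Fin n → ℝ, IsShapleySol E VMax r γ v → ∀ i : Fin n,
      (∀ h : i ∈ VMax, ∀ j : Fin n,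
        ((i, j) ∈ E ∧ v i = (1 - γ) * wt E r (i, j) + γ * v j) ↔ j = σ ⟨i, h⟩) ∧
      (∀ h : i ∉ VMax, ∀ j : Fin n,
        ((i, j) ∈ E ∧ v i = (1 - γ) * wt E r (i, j) + γ * v j) ↔ j = τ ⟨i, h⟩) :=
  stmt18_general n E VMax σ τ hXi r hr γ hγ1 hγ2
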